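/- arXiv:2007.07597 — 3 statements merged into one kernel-verified Lean document; each statement's English description precedes it below -/
import Mathlib

section
/- Let λ_1, …, λ_n be distinct points of the open unit disk and w_1, …, w_n complex numbers. There exists f in the Hardy space H² with f(λ_i) = w_i for all i and ‖f‖_{H²} ≤ C if and only if for all complex numbers α_1, …, α_n one has ∑_{i,j} conj(α_i) α_j (C² − conj(w_i) w_j (1 − conj(λ_i) λ_j)) / (1 − conj(λ_i) λ_j) ≥ 0. -/
/-!
Evaluation at `λ` is the inner product with the Szegő kernel `k_λ(z) = (1 - conj λ * z)⁻¹`, whose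
Taylor coefficients are `conj λ ^ k`, and `⟪k_{λ_j}, k_{λ_i}⟫ = (1 - conj λ_i * λ_j)⁻¹ = G i j`.
With `S = ∑ α_i w_i` and `g = ∑ conj α_i k_{λ_i}`, the quadratic form equals
`C² ⟪α, G α⟫ - |S|² = C² ‖g‖² - |S|²`. If `f` interpolates, then `S = ⟪g, f⟫` and Cauchy–Schwarz
gives `|S| ≤ ‖f‖ ‖g‖`. Conversely, for distinct nodes `G` is positive definite (Vandermonde), so
`G α = conj w` is solvable; then `g` itself interpolates and `‖g‖² = S`, so the form at `α` gives
`‖g‖ ≤ C`.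
-/

open scoped ComplexConjugate ComplexOrder
open Finset

section CauchySchwarz

variable {ι R : Type*} [NormedRing R] {a b : ι → R}

lemma summable_mul_of_summable_norm_sq [CompleteSpace R] (ha : Summable fun i => ‖a i‖ ^ 2)
    (hb : Summable fun i => ‖b i‖ ^ 2) : Summable fun i => a i * b i := by
  refine Summable.of_norm_bounded ((ha.add hb).div_const 2) fun i => ?_
  nlinarith [norm_mul_le (a i) (b i), sq_nonneg (‖a i‖ - ‖b i‖)]

lemma norm_tsum_mul_le_sqrt_mul_sqrt (ha : Summable fun i => ‖a i‖ ^ 2)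
    (hb : Summable fun i => ‖b i‖ ^ 2) :
    ‖∑' i, a i * b i‖ ≤ √(∑' i, ‖a i‖ ^ 2) * √(∑' i, ‖b i‖ ^ 2) := by
  simp only [Real.sqrt_eq_rpow, ← Real.rpow_two] at ha hb ⊢
  obtain ⟨hsum, hle⟩ := Real.summable_and_inner_le_Lp_mul_Lq_tsum_of_nonneg
    Real.HolderConjugate.two_two (fun i => norm_nonneg (a i)) (fun i => norm_nonneg (b i)) ha hb
  calc ‖∑' i, a i * b i‖ ≤ ∑' i, ‖a i‖ * ‖b i‖ :=
        tsum_of_norm_bounded hsum.hasSum fun i => norm_mul_le _ _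
    _ ≤ _ := hle

end CauchySchwarz

namespace HardySpace

open Matrix

variable {ι : Type*} [Fintype ι]

lemma norm_conj_mul_lt_one {z ζ : ℂ} (hz : ‖z‖ < 1) (hζ : ‖ζ‖ < 1) : ‖conj z * ζ‖ < 1 := by
  rw [norm_mul, RCLike.norm_conj]
  nlinarith [norm_nonneg z, norm_nonneg ζ]

lemma one_sub_conj_mul_ne_zero {z ζ : ℂ} (hz : ‖z‖ < 1) (hζ : ‖ζ‖ < 1) : 1 - conj z * ζ ≠ 0 :=
  sub_ne_zero.mpr fun h => by simpa [← h] using norm_conj_mul_lt_one hz hζ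

/-- The functional `f ↦ ∑ i, α i * f (lam i)` sends the Taylor coefficients `a` of `f` to
`∑' k, a k * evalCoeff lam α k`. -/
def evalCoeff (lam α : ι → ℂ) (k : ℕ) : ℂ := ∑ i, α i * lam i ^ k

noncomputable def kernelGram (lam : ι → ℂ) : Matrix ι ι ℂ :=
  of fun i j => (1 - conj (lam i) * lam j)⁻¹

variable {lam : ι → ℂ}

lemma star_dotProduct_kernelGram_mulVec (α : ι → ℂ) :
    star α ⬝ᵥ (kernelGram lam *ᵥ α) = ∑ i, ∑ j, conj (α i) * α j / (1 - conj (lam i) * lam j) := by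
  simp only [dotProduct, mulVec, kernelGram, of_apply, mul_sum, Pi.star_apply, RCLike.star_def]
  refine sum_congr rfl fun i _ => sum_congr rfl fun j _ => ?_
  ring

lemma conj_kernelGram_mulVec_apply (α : ι → ℂ) (i : ι) :
    conj ((kernelGram lam *ᵥ α) i) = ∑ j, conj (α j) / (1 - conj (lam j) * lam i) := by
  simp [mulVec, dotProduct, kernelGram, div_eq_mul_inv, mul_comm]

lemma interpolationForm_eq (hlam : ∀ i, ‖lam i‖ < 1) (c : ℂ) (w α : ι → ℂ) :
    ∑ i, ∑ j, conj (α i) * α j * (c - conj (w i) * w j * (1 - conj (lam i) * lam j)) /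
        (1 - conj (lam i) * lam j) =
      c * (star α ⬝ᵥ (kernelGram lam *ᵥ α)) - conj (∑ i, α i * w i) * ∑ i, α i * w i := by
  rw [star_dotProduct_kernelGram_mulVec, map_sum, sum_mul_sum, mul_sum, ← sum_sub_distrib]
  refine sum_congr rfl fun i _ => ?_
  rw [mul_sum, ← sum_sub_distrib]
  refine sum_congr rfl fun j _ => ?_
  have := one_sub_conj_mul_ne_zero (hlam i) (hlam j)
  field_simp
  simp only [map_mul]
  ring

lemma hasSum_norm_evalCoeff_sq (hlam : ∀ i, ‖lam i‖ < 1) (α : ι → ℂ) :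
    HasSum (fun k => ((‖evalCoeff lam α k‖ ^ 2 : ℝ) : ℂ)) (star α ⬝ᵥ (kernelGram lam *ᵥ α)) := by
  have hterm (k : ℕ) : ((‖evalCoeff lam α k‖ ^ 2 : ℝ) : ℂ) =
      ∑ i, ∑ j, conj (α i) * α j * (conj (lam i) * lam j) ^ k := by
    push_cast
    rw [← Complex.conj_mul', evalCoeff, map_sum, sum_mul_sum]
    refine sum_congr rfl fun i _ => sum_congr rfl fun j _ => ?_
    simp only [map_mul, map_pow]
    ring
  rw [funext hterm, star_dotProduct_kernelGram_mulVec]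
  refine hasSum_sum fun i _ => hasSum_sum fun j _ => ?_
  simpa [div_eq_mul_inv] using
    (hasSum_geometric_of_norm_lt_one (norm_conj_mul_lt_one (hlam i) (hlam j))).mul_left
      (conj (α i) * α j)

lemma summable_norm_evalCoeff_sq (hlam : ∀ i, ‖lam i‖ < 1) (α : ι → ℂ) :
    Summable fun k => ‖evalCoeff lam α k‖ ^ 2 :=
  (RCLike.summable_ofReal ℂ).mp (hasSum_norm_evalCoeff_sq hlam α).summable

lemma ofReal_tsum_norm_evalCoeff_sq (hlam : ∀ i, ‖lam i‖ < 1) (α : ι → ℂ) :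
    ((∑' k, ‖evalCoeff lam α k‖ ^ 2 : ℝ) : ℂ) = star α ⬝ᵥ (kernelGram lam *ᵥ α) := by
  rw [Complex.ofReal_tsum, (hasSum_norm_evalCoeff_sq hlam α).tsum_eq]

lemma posDef_kernelGram {n : ℕ} {lam : Fin n → ℂ} (hlam : ∀ i, ‖lam i‖ < 1)
    (hinj : Function.Injective lam) : (kernelGram lam).PosDef := by
  refine posDef_iff_dotProduct_mulVec.mpr ⟨?_, fun α hα => ?_⟩
  · ext i j
    simp [kernelGram, mul_comm]
  · rw [← ofReal_tsum_norm_evalCoeff_sq hlam, Complex.zero_lt_real]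
    refine lt_of_le_of_ne (tsum_nonneg fun k => by positivity) fun h => hα ?_
    have hzero := (hasSum_zero_iff_of_nonneg fun k => by positivity).mp
      (h ▸ (summable_norm_evalCoeff_sq hlam α).hasSum)
    exact eq_zero_of_forall_pow_sum_mul_pow_eq_zero hinj fun j => by
      simpa [evalCoeff] using congrFun hzero j

lemma hasSum_mul_evalCoeff {a : ℕ → ℂ} (ha : Summable fun k => ‖a k‖ ^ 2)
    (hlam : ∀ i, ‖lam i‖ < 1) {w : ι → ℂ} (hw : ∀ i, ∑' k, a k * lam i ^ k = w i) (α : ι → ℂ) :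
    HasSum (fun k => a k * evalCoeff lam α k) (∑ i, α i * w i) := by
  have hpow (i : ι) : Summable fun k => ‖lam i ^ k‖ ^ 2 := by
    refine (summable_geometric_of_lt_one (by positivity)
      (pow_lt_one₀ (norm_nonneg _) (hlam i) two_ne_zero)).congr fun k => ?_
    rw [norm_pow, ← pow_mul, ← pow_mul, mul_comm]
  simp only [evalCoeff, mul_sum]
  refine hasSum_sum fun i _ => ?_
  have := (summable_mul_of_summable_norm_sq ha (hpow i)).hasSum.mul_left (α i)
  rw [hw i] at this
  simpa only [mul_left_comm] using this

lemma norm_sum_mul_sq_le {a : ℕ → ℂ} (ha : Summable fun k => ‖a k‖ ^ 2)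
    (hlam : ∀ i, ‖lam i‖ < 1) {w : ι → ℂ} (hw : ∀ i, ∑' k, a k * lam i ^ k = w i) {C : ℝ}
    (haC : √(∑' k, ‖a k‖ ^ 2) ≤ C) (α : ι → ℂ) :
    ‖∑ i, α i * w i‖ ^ 2 ≤ C ^ 2 * ∑' k, ‖evalCoeff lam α k‖ ^ 2 := by
  have hS := norm_tsum_mul_le_sqrt_mul_sqrt ha (summable_norm_evalCoeff_sq hlam α)
  rw [(hasSum_mul_evalCoeff ha hlam hw α).tsum_eq] at hS
  calc _ ≤ (C * √(∑' k, ‖evalCoeff lam α k‖ ^ 2)) ^ 2 := by gcongr; exact hS.trans (by gcongr)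
    _ = _ := by rw [mul_pow, Real.sq_sqrt (tsum_nonneg fun k => by positivity)]

lemma hasSum_conj_evalCoeff_mul_pow (hlam : ∀ i, ‖lam i‖ < 1) (α : ι → ℂ) {z : ℂ}
    (hz : ‖z‖ < 1) :
    HasSum (fun k => conj (evalCoeff lam α k) * z ^ k)
      (∑ i, conj (α i) / (1 - conj (lam i) * z)) := by
  simp only [evalCoeff, map_sum, sum_mul]
  refine hasSum_sum fun i _ => ?_
  simpa [div_eq_mul_inv, mul_pow, mul_assoc] using
    (hasSum_geometric_of_norm_lt_one (norm_conj_mul_lt_one (hlam i) hz)).mul_left (conj (α i))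

lemma tsum_conj_evalCoeff_mul_pow_of_mulVec_eq (hlam : ∀ i, ‖lam i‖ < 1) {α w : ι → ℂ}
    (hα : kernelGram lam *ᵥ α = star w) (i : ι) :
    ∑' k, conj (evalCoeff lam α k) * lam i ^ k = w i := by
  rw [(hasSum_conj_evalCoeff_mul_pow hlam α (hlam i)).tsum_eq, ← conj_kernelGram_mulVec_apply, hα]
  simp

lemma sum_mul_eq_tsum_norm_evalCoeff_sq_of_mulVec_eq (hlam : ∀ i, ‖lam i‖ < 1) {α w : ι → ℂ}
    (hα : kernelGram lam *ᵥ α = star w) :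
    ∑ i, α i * w i = ((∑' k, ‖evalCoeff lam α k‖ ^ 2 : ℝ) : ℂ) := by
  rw [← Complex.conj_ofReal, ofReal_tsum_norm_evalCoeff_sq hlam, hα]
  simp [dotProduct]

end HardySpace

open HardySpace Matrix in
/-- H² interpolation criterion. There exists `f ∈ H²` (given by its
square-summable Taylor coefficients `a`) with `f(λ_i) = w_i` and `‖f‖_{H²} ≤ C` iff
the stated quadratic form is nonnegative (in the order of ℂ, i.e. it is real ≥ 0)
for all `α : Fin n → ℂ`. -/
theorem stmt8 (n : ℕ) (lam : Fin n → ℂ) (hlam : ∀ i, ‖lam i‖ < 1)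
    (hdist : Function.Injective lam) (w : Fin n → ℂ) (C : ℝ) (hC : 0 < C) :
    (∃ a : ℕ → ℂ, Summable (fun k => ‖a k‖ ^ 2) ∧
        (∀ i, ∑' k : ℕ, a k * (lam i) ^ k = w i) ∧
        Real.sqrt (∑' k : ℕ, ‖a k‖ ^ 2) ≤ C)
      ↔ ∀ α : Fin n → ℂ,
        0 ≤ ∑ i, ∑ j, conj (α i) * α j *
          ((C : ℂ) ^ 2 - conj (w i) * w j * (1 - conj (lam i) * lam j)) /
            (1 - conj (lam i) * lam j) := by
  simp only [interpolationForm_eq hlam, ← ofReal_tsum_norm_evalCoeff_sq hlam, Complex.conj_mul']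
  constructor
  · rintro ⟨a, ha, hw, haC⟩ α
    exact_mod_cast sub_nonneg.mpr (norm_sum_mul_sq_le ha hlam hw haC α)
  · intro hform
    obtain ⟨α, hα⟩ : ∃ α, kernelGram lam *ᵥ α = star w :=
      mulVec_surjective_iff_isUnit.mpr (posDef_kernelGram hlam hdist).isUnit (star w)
    refine ⟨fun k => conj (evalCoeff lam α k), by simpa using summable_norm_evalCoeff_sq hlam α,
      tsum_conj_evalCoeff_mul_pow_of_mulVec_eq hlam hα, ?_⟩
    set Q := ∑' k, ‖evalCoeff lam α k‖ ^ 2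
    have hQ : 0 ≤ Q := tsum_nonneg fun k => by positivity
    have hQC : Q ≤ C ^ 2 := by
      have h := hform α
      rw [sum_mul_eq_tsum_norm_evalCoeff_sq_of_mulVec_eq hlam hα, Complex.norm_real,
        Real.norm_of_nonneg hQ] at h
      have h' : Q ^ 2 ≤ C ^ 2 * Q := by exact_mod_cast sub_nonneg.mp h
      nlinarith
    simpa only [Complex.norm_conj] using (Real.sqrt_le_sqrt hQC).trans_eq (Real.sqrt_sq hC.le)
end

section
/- (Pick's theorem) Let λ_1, …, λ_n be distinct points in the open unit disk and w_1, …, w_n ∈ ℂ, C > 0. There exists f ∈ H^∞ (bounded holomorphic on the disk) with f(λ_i) = w_i for all i and sup_{z∈𝔻}|f(z)| ≤ C if and only if the matrix [(C² − conj(w_i) w_j)/(1 − conj(λ_i) λ_j)]_{i,j=1}^n is positive semidefinite. -/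
/-!
Pick's theorem by the Schur algorithm, by induction on the number of nodes, after scaling to
`C = 1`. Both conditions force `‖w i‖ ≤ 1`. If `‖w 0‖ = 1`, then maximum modulus on one side and
the vanishing diagonal entry of a positive kernel on the other both force `w` to be constant.
If `‖w 0‖ < 1`, compose with the disc automorphisms `mobius a z = (z - a) / (1 - conj a * z)`
sending `lam 0` and `w 0` to `0`. For interpolants, Schwarz's lemma turns `f` into a Schur function
`(mobius (w 0) ∘ f) / mobius (lam 0)` interpolating the reduced data `schurReduce lam w` at the
remaining nodes. For kernels, Möbius maps multiply the Pick kernel by a positive constant and a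
diagonal congruence. Once both `lam 0` and `w 0` are `0`, the kernel is the all-ones kernel plus a
congruent copy of the reduced Pick kernel, so the two kernels are positive together.
-/

open scoped ComplexConjugate ComplexOrder

open Complex Metric Set Function

noncomputable def mobius (a z : ℂ) : ℂ := (z - a) / (1 - conj a * z)

section Mobius

variable {a b z : ℂ}

lemma one_sub_conj_mul_ne_zero (ha : ‖a‖ < 1) (hz : ‖z‖ ≤ 1) : 1 - conj a * z ≠ 0 := by
  refine sub_ne_zero.mpr fun h => ?_
  have : ‖conj a * z‖ < 1 := by
    rw [norm_mul, Complex.norm_conj]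
    exact (mul_le_of_le_one_right (norm_nonneg _) hz).trans_lt ha
  rw [← h, norm_one] at this
  exact lt_irrefl _ this

@[simp] lemma mobius_self (a : ℂ) : mobius a a = 0 := by simp [mobius]

lemma mobius_zero : mobius 0 = id := funext fun z => by simp [mobius]

lemma mobius_neg_apply_zero (a : ℂ) : mobius (-a) 0 = a := by simp [mobius]

lemma mobius_ne_zero (hz : 1 - conj a * z ≠ 0) (hza : z ≠ a) : mobius a z ≠ 0 :=
  div_ne_zero (sub_ne_zero.mpr hza) hz

lemma mobius_neg_mobius (ha : ‖a‖ < 1) (hz : 1 - conj a * z ≠ 0) :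
    mobius (-a) (mobius a z) = z := by
  have haa := one_sub_conj_mul_ne_zero ha ha.le
  have hz' : 1 - z * conj a ≠ 0 := by rwa [mul_comm]
  have hnum : mobius a z - -a = (1 - conj a * a) * z / (1 - conj a * z) := by
    rw [mobius, eq_div_iff hz]; field_simp; ring
  have hden : 1 - -conj a * mobius a z = (1 - conj a * a) / (1 - conj a * z) := by
    rw [mobius, eq_div_iff hz]; field_simp; ring
  rw [mobius, map_neg, hnum, hden, div_div_div_cancel_right₀ hz, mul_div_cancel_left₀ _ haa]

lemma sq_norm_one_sub_conj_mul_sub_sq_norm_sub (a z : ℂ) :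
    ‖1 - conj a * z‖ ^ 2 - ‖z - a‖ ^ 2 = (1 - ‖a‖ ^ 2) * (1 - ‖z‖ ^ 2) := by
  simp only [Complex.sq_norm, normSq_apply, sub_re, sub_im, mul_re, mul_im, conj_re, conj_im,
    one_re, one_im]
  ring

lemma norm_mobius_le_one (ha : ‖a‖ < 1) (hz : ‖z‖ ≤ 1) : ‖mobius a z‖ ≤ 1 := by
  rw [mobius, norm_div, div_le_one (norm_pos_iff.mpr (one_sub_conj_mul_ne_zero ha hz)),
    ← sq_le_sq₀ (norm_nonneg _) (norm_nonneg _)]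
  have := sq_norm_one_sub_conj_mul_sub_sq_norm_sub a z
  have ha2 : 0 < 1 - ‖a‖ ^ 2 := by nlinarith [norm_nonneg a]
  have hz2 : 0 ≤ 1 - ‖z‖ ^ 2 := by nlinarith [norm_nonneg z]
  nlinarith [mul_nonneg ha2.le hz2]

lemma norm_mobius_lt_one (ha : ‖a‖ < 1) (hz : ‖z‖ < 1) : ‖mobius a z‖ < 1 := by
  rw [mobius, norm_div, div_lt_one (norm_pos_iff.mpr (one_sub_conj_mul_ne_zero ha hz.le)),
    ← sq_lt_sq₀ (norm_nonneg _) (norm_nonneg _)]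
  have := sq_norm_one_sub_conj_mul_sub_sq_norm_sub a z
  have ha2 : 0 < 1 - ‖a‖ ^ 2 := by nlinarith [norm_nonneg a]
  have hz2 : 0 < 1 - ‖z‖ ^ 2 := by nlinarith [norm_nonneg z]
  nlinarith [mul_pos ha2 hz2]

lemma mapsTo_mobius_ball (ha : ‖a‖ < 1) : MapsTo (mobius a) (ball 0 1) (ball 0 1) :=
  fun z hz => by simpa using norm_mobius_lt_one ha (by simpa using hz)

lemma one_sub_conj_mobius_mul_mobius {x y : ℂ} (hx : 1 - conj b * x ≠ 0)
    (hy : 1 - conj b * y ≠ 0) :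
    1 - conj (mobius b x) * mobius b y =
      (1 - ‖b‖ ^ 2) * (1 - conj x * y) / (conj (1 - conj b * x) * (1 - conj b * y)) := by
  have hx' : conj (1 - conj b * x) ≠ 0 := (map_ne_zero _).mpr hx
  rw [mobius, mobius, map_div₀, div_mul_div_comm, one_sub_div (mul_ne_zero hx' hy),
    ← conj_mul']
  congr 1
  simp only [map_sub, map_mul, map_one, conj_conj]
  ring

lemma differentiableOn_mobius (ha : ‖a‖ < 1) :
    DifferentiableOn ℂ (mobius a) (closedBall 0 1) := fun z hz =>
  ((differentiableAt_id.sub_const a).div ((differentiableAt_const _).sub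
    ((differentiableAt_const _).mul differentiableAt_id))
    (one_sub_conj_mul_ne_zero ha (by simpa using hz))).differentiableWithinAt

end Mobius

section Kernel

variable {ι : Type*} [Fintype ι]

noncomputable def kernelForm (K : ι → ι → ℂ) (α : ι → ℂ) : ℂ :=
  ∑ i, ∑ j, conj (α i) * α j * K i j

def IsPosSemidefKernel (K : ι → ι → ℂ) : Prop := ∀ α, 0 ≤ kernelForm K α

lemma kernelForm_congr {K K' : ι → ι → ℂ} {r : ℝ} {c : ι → ℂ}
    (h : ∀ i j, K' i j = r * (conj (c i) * c j * K i j)) (α : ι → ℂ) :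
    kernelForm K' α = r • kernelForm K (c * α) := by
  simp only [kernelForm, h, real_smul, Finset.mul_sum, Pi.mul_apply, map_mul]
  exact Finset.sum_congr rfl fun i _ => Finset.sum_congr rfl fun j _ => by ring

lemma isPosSemidefKernel_congr_iff {K K' : ι → ι → ℂ} {r : ℝ} (hr : 0 < r) {c : ι → ℂ}
    (hc : ∀ i, c i ≠ 0) (h : ∀ i j, K' i j = r * (conj (c i) * c j * K i j)) :
    IsPosSemidefKernel K' ↔ IsPosSemidefKernel K := by
  simp only [IsPosSemidefKernel, kernelForm_congr h, smul_nonneg_iff_nonneg_of_pos_left hr]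
  refine ⟨fun hK β => ?_, fun hK α => hK _⟩
  convert hK (β / c)
  ext i
  exact (mul_div_cancel₀ _ (hc i)).symm

lemma IsPosSemidefKernel.diag_nonneg {K : ι → ι → ℂ} (hK : IsPosSemidefKernel K) (i : ι) :
    0 ≤ K i i := by
  classical
  simpa [kernelForm, Pi.single_apply] using hK (Pi.single i 1)

lemma IsPosSemidefKernel.apply_eq_zero_of_diag_eq_zero {K : ι → ι → ℂ}
    (hK : IsPosSemidefKernel K) (hK_conj : ∀ i j, conj (K i j) = K j i) {i₀ : ι}
    (h₀ : K i₀ i₀ = 0) (j : ι) : K i₀ j = 0 := by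
  classical
  obtain rfl | hj := eq_or_ne j i₀
  · exact h₀
  by_contra hx
  have hx' : conj (K i₀ j) ≠ 0 := (map_ne_zero _).mpr hx
  -- `α = s • e i₀ + e j` with this `s` makes the form equal to `-1`
  set s := -(1 + K j j) / (2 * conj (K i₀ j))
  have hform : kernelForm K (Pi.single i₀ s + Pi.single j 1) = -1 := by
    simp only [kernelForm]
    rw [Fintype.sum_eq_add i₀ j hj.symm (by intro k hk; simp [hk.1, hk.2]),
      Fintype.sum_eq_add i₀ j hj.symm (by intro k hk; simp [hk.1, hk.2]),
      Fintype.sum_eq_add i₀ j hj.symm (by intro k hk; simp [hk.1, hk.2])]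
    simp only [Pi.add_apply, Pi.single_eq_same, Pi.single_eq_of_ne hj, Pi.single_eq_of_ne hj.symm,
      add_zero, zero_add, map_one, h₀, ← hK_conj i₀ j]
    simp only [s, map_div₀, map_neg, map_add, map_one, map_mul, conj_conj, hK_conj j j, map_ofNat]
    field_simp
    ring
  have := hK (Pi.single i₀ s + Pi.single j 1)
  rw [hform] at this
  norm_num [Complex.le_def] at this

end Kernel

section Pick

variable {ι : Type*}

noncomputable def pickKernel (lam w : ι → ℂ) (i j : ι) : ℂ :=
  (1 - conj (w i) * w j) / (1 - conj (lam i) * lam j)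

lemma conj_pickKernel (lam w : ι → ℂ) (i j : ι) :
    conj (pickKernel lam w i j) = pickKernel lam w j i := by
  simp [pickKernel, map_div₀, mul_comm]

lemma pickKernel_self (lam w : ι → ℂ) (i : ι) :
    pickKernel lam w i i = ((1 - ‖w i‖ ^ 2) / (1 - ‖lam i‖ ^ 2) : ℝ) := by
  simp [pickKernel, conj_mul']

variable [Fintype ι]

lemma IsPosSemidefKernel.norm_le_one_of_pickKernel {lam w : ι → ℂ}
    (h : IsPosSemidefKernel (pickKernel lam w)) {i : ι} (hlam : ‖lam i‖ < 1) : ‖w i‖ ≤ 1 := by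
  have hi := h.diag_nonneg i
  rw [pickKernel_self, zero_le_real] at hi
  have hden : 0 < 1 - ‖lam i‖ ^ 2 := by nlinarith [norm_nonneg (lam i)]
  have hnum := (div_nonneg_iff.mp hi).resolve_right (fun h => by linarith [h.2])
  nlinarith [norm_nonneg (w i), hnum.1]

lemma pickKernel_posSemidef_iff_of_norm_eq_one {lam w : ι → ℂ} (hlam : ∀ i, ‖lam i‖ < 1)
    {i₀ : ι} (h₀ : ‖w i₀‖ = 1) :
    IsPosSemidefKernel (pickKernel lam w) ↔ ∀ i, w i = w i₀ := by
  have hw₀ : conj (w i₀) * w i₀ = 1 := by simp [conj_mul', h₀]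
  refine ⟨fun hK i => ?_, fun hw α => by simp [kernelForm, pickKernel, hw, hw₀]⟩
  have h := hK.apply_eq_zero_of_diag_eq_zero (conj_pickKernel lam w) (i₀ := i₀)
    (by simp [pickKernel, hw₀]) i
  rcases div_eq_zero_iff.mp h with h | h
  · linear_combination -w i₀ * h - w i * hw₀
  · exact absurd h (one_sub_conj_mul_ne_zero (hlam i₀) (hlam i).le)

end Pick

section PickIdentities

variable {ι : Type*}

lemma pickKernel_comp_mobius {lam w : ι → ℂ} {a b : ℂ} (hlam : ∀ i, 1 - conj a * lam i ≠ 0)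
    (hw : ∀ i, 1 - conj b * w i ≠ 0) (i j : ι) :
    pickKernel (mobius a ∘ lam) (mobius b ∘ w) i j =
      ((1 - ‖b‖ ^ 2) / (1 - ‖a‖ ^ 2) : ℝ) *
        (conj ((1 - conj a * lam i) / (1 - conj b * w i)) *
          ((1 - conj a * lam j) / (1 - conj b * w j)) * pickKernel lam w i j) := by
  simp only [pickKernel, comp_apply, one_sub_conj_mobius_mul_mobius (hw i) (hw j),
    one_sub_conj_mobius_mul_mobius (hlam i) (hlam j), map_div₀]
  push_cast
  field_simp [hlam j, hw j]

lemma pickKernel_mul {lam : ι → ℂ} (hlam : ∀ i, ‖lam i‖ < 1) (w : ι → ℂ) (i j : ι) :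
    pickKernel lam (lam * w) i j = 1 + conj (lam i) * lam j * pickKernel lam w i j := by
  have := one_sub_conj_mul_ne_zero (hlam i) (hlam j).le
  simp only [pickKernel, Pi.mul_apply, map_mul]
  field_simp
  ring

end PickIdentities

section PickSchur

variable {ι : Type*} [Fintype ι]

lemma pickKernel_posSemidef_comp_mobius_iff {lam w : ι → ℂ} {a b : ℂ} (ha : ‖a‖ < 1)
    (hb : ‖b‖ < 1) (hlam : ∀ i, 1 - conj a * lam i ≠ 0) (hw : ∀ i, 1 - conj b * w i ≠ 0) :
    IsPosSemidefKernel (pickKernel (mobius a ∘ lam) (mobius b ∘ w)) ↔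
      IsPosSemidefKernel (pickKernel lam w) := by
  refine isPosSemidefKernel_congr_iff ?_ (fun i => div_ne_zero (hlam i) (hw i))
    (pickKernel_comp_mobius hlam hw)
  have : ∀ {x : ℂ}, ‖x‖ < 1 → 0 < 1 - ‖x‖ ^ 2 := fun {x} hx => by nlinarith [norm_nonneg x]
  exact div_pos (this hb) (this ha)

lemma kernelForm_one_add {K L : ι → ι → ℂ} {v : ι → ℂ}
    (h : ∀ i j, K i j = 1 + conj (v i) * v j * L i j) (α : ι → ℂ) :
    kernelForm K α = conj (∑ i, α i) * ∑ i, α i + kernelForm L (v * α) := by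
  simp only [kernelForm, h, map_sum, Finset.sum_mul_sum, ← Finset.sum_add_distrib, Pi.mul_apply,
    map_mul]
  exact Finset.sum_congr rfl fun i _ => Finset.sum_congr rfl fun j _ => by ring

lemma kernelForm_of_apply_zero {n : ℕ} (K : Fin (n + 1) → Fin (n + 1) → ℂ)
    {β : Fin (n + 1) → ℂ} (hβ : β 0 = 0) :
    kernelForm K β =
      kernelForm (fun i j : Fin n => K i.succ j.succ) (fun k : Fin n => β k.succ) := by
  simp [kernelForm, Fin.sum_univ_succ, hβ]

lemma pickKernel_posSemidef_iff_of_apply_zero {n : ℕ} {v u : Fin (n + 1) → ℂ} {w : Fin n → ℂ}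
    (hv : ∀ i, ‖v i‖ < 1) (hv0 : v 0 = 0) (hv_succ : ∀ k : Fin n, v k.succ ≠ 0) (hu0 : u 0 = 0)
    (hu : ∀ k : Fin n, u k.succ = v k.succ * w k) :
    IsPosSemidefKernel (pickKernel v u) ↔
      IsPosSemidefKernel (pickKernel (fun k => v k.succ) w) := by
  have hu' : u = v * Fin.cons 0 w := funext fun i => Fin.cases (by simp [hu0])
    (fun k => by simp [hu]) i
  have hform : ∀ α, kernelForm (pickKernel v u) α = conj (∑ i, α i) * ∑ i, α i +
      kernelForm (pickKernel (fun k => v k.succ) w) (fun k => v k.succ * α k.succ) := by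
    intro α
    rw [hu', kernelForm_one_add (pickKernel_mul hv _) α,
      kernelForm_of_apply_zero _ (by simp [hv0])]
    rfl
  refine ⟨fun h γ => ?_, fun h α => by rw [hform]; exact add_nonneg (star_mul_self_nonneg _) (h _)⟩
  -- make `∑ α` vanish while `v k.succ * α k.succ = γ k`
  let α : Fin (n + 1) → ℂ := Fin.cons (-∑ k, γ k / v k.succ) fun k => γ k / v k.succ
  have hγ : (fun k => v k.succ * α k.succ) = γ := funext fun k => mul_div_cancel₀ _ (hv_succ k)
  have := h α
  rwa [hform, show ∑ i, α i = 0 by simp [α, Fin.sum_univ_succ], hγ, map_zero, zero_mul,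
    zero_add] at this

end PickSchur

noncomputable def schurReduce {n : ℕ} (lam w : Fin (n + 1) → ℂ) (k : Fin n) : ℂ :=
  mobius (w 0) (w k.succ) / mobius (lam 0) (lam k.succ)

lemma mobius_apply_succ_ne_zero {n : ℕ} {lam : Fin (n + 1) → ℂ} (hlam : ∀ i, ‖lam i‖ < 1)
    (hinj : Injective lam) (k : Fin n) : mobius (lam 0) (lam k.succ) ≠ 0 :=
  mobius_ne_zero (one_sub_conj_mul_ne_zero (hlam 0) (hlam _).le)
    (hinj.ne (Fin.succ_ne_zero k))

lemma pickKernel_posSemidef_iff_schurReduce {n : ℕ} {lam w : Fin (n + 1) → ℂ}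
    (hlam : ∀ i, ‖lam i‖ < 1) (hinj : Injective lam) (hw : ∀ i, ‖w i‖ ≤ 1) (hw0 : ‖w 0‖ < 1) :
    IsPosSemidefKernel (pickKernel lam w) ↔
      IsPosSemidefKernel (pickKernel (fun k => lam k.succ) (schurReduce lam w)) := by
  have hv : ∀ i, ‖(mobius (lam 0) ∘ lam) i‖ < 1 := fun i => norm_mobius_lt_one (hlam 0) (hlam i)
  have hden : ∀ i, 1 - conj (lam 0) * lam i ≠ 0 :=
    fun i => one_sub_conj_mul_ne_zero (hlam 0) (hlam i).le
  rw [← pickKernel_posSemidef_comp_mobius_iff (hlam 0) hw0 hden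
      (fun i => one_sub_conj_mul_ne_zero hw0 (hw i)),
    pickKernel_posSemidef_iff_of_apply_zero hv (mobius_self _)
      (mobius_apply_succ_ne_zero hlam hinj) (mobius_self _)
      (fun k => (mul_div_cancel₀ _ (mobius_apply_succ_ne_zero hlam hinj k)).symm),
    ← pickKernel_posSemidef_comp_mobius_iff (b := 0) (hlam 0) (by simp) (fun k => hden _)
      (by simp), mobius_zero, id_comp]
  rfl

def IsSchurFunction (f : ℂ → ℂ) : Prop :=
  DifferentiableOn ℂ f (ball 0 1) ∧ MapsTo f (ball 0 1) (closedBall 0 1)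

def HasSchurInterpolant {ι : Type*} (lam w : ι → ℂ) : Prop :=
  ∃ f, IsSchurFunction f ∧ ∀ i, f (lam i) = w i

namespace IsSchurFunction

variable {f : ℂ → ℂ} {a : ℂ}

lemma const {c : ℂ} (hc : ‖c‖ ≤ 1) : IsSchurFunction fun _ => c :=
  ⟨differentiableOn_const c, fun _ _ => by simpa using hc⟩

lemma norm_le_one (hf : IsSchurFunction f) {z : ℂ} (hz : ‖z‖ < 1) : ‖f z‖ ≤ 1 := by
  simpa using hf.2 (by simpa using hz)

lemma mobius_comp (hf : IsSchurFunction f) (ha : ‖a‖ < 1) : IsSchurFunction (mobius a ∘ f) :=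
  ⟨(differentiableOn_mobius ha).comp hf.1 hf.2,
    fun z hz => by simpa using norm_mobius_le_one ha (hf.norm_le_one (by simpa using hz))⟩

lemma comp_mobius (hf : IsSchurFunction f) (ha : ‖a‖ < 1) : IsSchurFunction (f ∘ mobius a) :=
  ⟨hf.1.comp ((differentiableOn_mobius ha).mono ball_subset_closedBall) (mapsTo_mobius_ball ha),
    hf.2.comp (mapsTo_mobius_ball ha)⟩

lemma mobius_mul (hf : IsSchurFunction f) (ha : ‖a‖ < 1) :
    IsSchurFunction fun z => mobius a z * f z :=
  ⟨((differentiableOn_mobius ha).mono ball_subset_closedBall).mul hf.1, fun z hz => by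
    have hz : ‖z‖ < 1 := by simpa using hz
    simpa [norm_mul] using mul_le_one₀ (norm_mobius_le_one ha hz.le) (norm_nonneg _)
      (hf.norm_le_one hz)⟩

/-- Schwarz's lemma, moved from `0` to `a` by the disc automorphism `mobius a`. -/
lemma exists_eq_mobius_mul (hf : IsSchurFunction f) (ha : ‖a‖ < 1) (hfa : f a = 0) :
    ∃ g, IsSchurFunction g ∧ ∀ z ∈ ball (0 : ℂ) 1, f z = mobius a z * g z := by
  set F := f ∘ mobius (-a)
  have hF : IsSchurFunction F := hf.comp_mobius (by simpa using ha)
  have hF0 : F 0 = 0 := by simp [F, mobius_neg_apply_zero, hfa]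
  refine ⟨dslope F 0 ∘ mobius a, ⟨?_, fun z hz => ?_⟩, fun z hz => ?_⟩
  · exact ((differentiableOn_dslope (isOpen_ball.mem_nhds (mem_ball_self one_pos))).mpr hF.1).comp
      ((differentiableOn_mobius ha).mono ball_subset_closedBall) (mapsTo_mobius_ball ha)
  · have := norm_dslope_le_div_of_mapsTo_ball hF.1 (by rw [hF0]; exact hF.2)
      (mapsTo_mobius_ball ha hz)
    simpa using this
  · have hz : ‖z‖ < 1 := by simpa using hz
    have := sub_smul_dslope F 0 (mobius a z)
    rw [hF0, sub_zero, sub_zero, smul_eq_mul] at this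
    simp only [comp_apply, this, F, mobius_neg_mobius ha (one_sub_conj_mul_ne_zero ha hz.le)]

end IsSchurFunction

lemma HasSchurInterpolant.norm_le_one {ι : Type*} {lam w : ι → ℂ} (h : HasSchurInterpolant lam w)
    {i : ι} (hlam : ‖lam i‖ < 1) : ‖w i‖ ≤ 1 := by
  obtain ⟨f, hf, hfw⟩ := h
  exact hfw i ▸ hf.norm_le_one hlam

lemma hasSchurInterpolant_iff_of_norm_eq_one {ι : Type*} {lam w : ι → ℂ}
    (hlam : ∀ i, ‖lam i‖ < 1) {i₀ : ι} (h₀ : ‖w i₀‖ = 1) :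
    HasSchurInterpolant lam w ↔ ∀ i, w i = w i₀ := by
  have hball : ∀ i, lam i ∈ ball (0 : ℂ) 1 := fun i => by simpa using hlam i
  refine ⟨fun ⟨f, hf, hfw⟩ i => ?_,
    fun hw => ⟨_, IsSchurFunction.const h₀.le, fun i => (hw i).symm⟩⟩
  have hmax : IsMaxOn (norm ∘ f) (ball 0 1) (lam i₀) := fun z hz => by
    simpa [hfw, h₀] using hf.2 hz
  have := eqOn_of_isPreconnected_of_isMaxOn_norm (convex_ball 0 1).isPreconnected isOpen_ball
    hf.1 (hball i₀) hmax (hball i)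
  simpa [hfw] using this

lemma hasSchurInterpolant_iff_schurReduce {n : ℕ} {lam w : Fin (n + 1) → ℂ}
    (hlam : ∀ i, ‖lam i‖ < 1) (hinj : Injective lam) (hw : ∀ i, ‖w i‖ ≤ 1) (hw0 : ‖w 0‖ < 1) :
    HasSchurInterpolant lam w ↔ HasSchurInterpolant (fun k => lam k.succ) (schurReduce lam w) := by
  constructor
  · rintro ⟨f, hf, hfw⟩
    obtain ⟨g, hg, hfg⟩ := (hf.mobius_comp hw0).exists_eq_mobius_mul (hlam 0) (by simp [hfw])
    refine ⟨g, hg, fun k => ?_⟩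
    have := hfg (lam k.succ) (by simpa using hlam _)
    rw [schurReduce, eq_div_iff (mobius_apply_succ_ne_zero hlam hinj k), mul_comm, ← this]
    simp [hfw]
  · rintro ⟨g, hg, hgw⟩
    refine ⟨mobius (-w 0) ∘ fun z => mobius (lam 0) z * g z,
      (hg.mobius_mul (hlam 0)).mobius_comp (by simpa using hw0), Fin.cases ?_ fun k => ?_⟩
    · simp [mobius_neg_apply_zero]
    · simp only [comp_apply, hgw, schurReduce,
        mul_div_cancel₀ _ (mobius_apply_succ_ne_zero hlam hinj k)]
      exact mobius_neg_mobius hw0 (one_sub_conj_mul_ne_zero hw0 (hw _))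

theorem hasSchurInterpolant_iff_pickKernel_posSemidef {n : ℕ} {lam : Fin n → ℂ}
    (hlam : ∀ i, ‖lam i‖ < 1) (hinj : Injective lam) (w : Fin n → ℂ) :
    HasSchurInterpolant lam w ↔ IsPosSemidefKernel (pickKernel lam w) := by
  induction n with
  | zero =>
    exact iff_of_true ⟨_, IsSchurFunction.const (c := 0) (by simp), finZeroElim⟩
      fun α => by simp [kernelForm]
  | succ n ih =>
    suffices hw : (∀ i, ‖w i‖ ≤ 1) → (HasSchurInterpolant lam w ↔
        IsPosSemidefKernel (pickKernel lam w)) from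
      ⟨fun h => (hw fun i => h.norm_le_one (hlam i)).mp h,
        fun h => (hw fun i => h.norm_le_one_of_pickKernel (hlam i)).mpr h⟩
    intro hw
    rcases (hw 0).eq_or_lt with h0 | h0
    · rw [hasSchurInterpolant_iff_of_norm_eq_one hlam h0,
        pickKernel_posSemidef_iff_of_norm_eq_one hlam h0]
    · rw [hasSchurInterpolant_iff_schurReduce hlam hinj hw h0,
        pickKernel_posSemidef_iff_schurReduce hlam hinj hw h0]
      exact ih (fun k => hlam _) (hinj.comp (Fin.succ_injective n)) _

lemma hasSchurInterpolant_div_iff {ι : Type*} (lam w : ι → ℂ) {C : ℝ} (hC : 0 < C) :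
    HasSchurInterpolant lam (fun i => w i / C) ↔
      ∃ f : ℂ → ℂ, DifferentiableOn ℂ f (ball 0 1) ∧ (∀ z ∈ ball (0 : ℂ) 1, ‖f z‖ ≤ C) ∧
        ∀ i, f (lam i) = w i := by
  have hC' : (C : ℂ) ≠ 0 := ofReal_ne_zero.mpr hC.ne'
  have hnorm : ∀ z : ℂ, ‖z / C‖ ≤ 1 ↔ ‖z‖ ≤ C := fun z => by
    rw [norm_div, norm_real, Real.norm_of_nonneg hC.le, div_le_one hC]
  constructor
  · rintro ⟨g, hg, hgw⟩
    refine ⟨fun z => C * g z, (differentiableOn_const _).mul hg.1, fun z hz => ?_, fun i => ?_⟩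
    · rw [← hnorm, mul_div_cancel_left₀ _ hC']
      exact hg.norm_le_one (by simpa using hz)
    · exact (congrArg _ (hgw i)).trans (mul_div_cancel₀ _ hC')
  · rintro ⟨f, hfd, hfC, hfw⟩
    exact ⟨fun z => f z / C,
      ⟨hfd.div_const _, fun z hz => by simpa using (hnorm _).mpr (hfC z hz)⟩,
      fun i => by simp [hfw]⟩

lemma pick_sum_eq_smul_kernelForm {ι : Type*} [Fintype ι] (lam w α : ι → ℂ) {C : ℝ} (hC : C ≠ 0) :
    ∑ i, ∑ j, conj (α i) * α j * ((C : ℂ) ^ 2 - conj (w i) * w j) / (1 - conj (lam i) * lam j) =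
      (C ^ 2 : ℝ) • kernelForm (pickKernel lam fun i => w i / C) α := by
  have hC' : (C : ℂ) ≠ 0 := ofReal_ne_zero.mpr hC
  simp only [kernelForm, pickKernel, real_smul, Finset.mul_sum, map_div₀, conj_ofReal]
  refine Finset.sum_congr rfl fun i _ => Finset.sum_congr rfl fun j _ => ?_
  push_cast
  field_simp

/-- Pick's theorem: for distinct `λ_i` in the open unit disk,
`w_i ∈ ℂ` and `C > 0`, there exists a bounded holomorphic `f` on the disk with
`f(λ_i) = w_i` and `sup_𝔻 |f| ≤ C` iff the Pick matrix
`[(C² - conj(w_i) w_j)/(1 - conj(λ_i) λ_j)]` is positive semidefinite. -/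
theorem stmt9 (n : ℕ) (lam : Fin n → ℂ) (hlam : ∀ i, ‖lam i‖ < 1)
    (hdist : Function.Injective lam) (w : Fin n → ℂ) (C : ℝ) (hC : 0 < C) :
    (∃ f : ℂ → ℂ, DifferentiableOn ℂ f (Metric.ball (0 : ℂ) 1) ∧
        (∀ z ∈ Metric.ball (0 : ℂ) 1, ‖f z‖ ≤ C) ∧
        (∀ i, f (lam i) = w i))
      ↔ ∀ α : Fin n → ℂ,
        0 ≤ ∑ i, ∑ j, conj (α i) * α j *
          ((C : ℂ) ^ 2 - conj (w i) * w j) / (1 - conj (lam i) * lam j) := by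
  rw [← hasSchurInterpolant_div_iff lam w hC,
    hasSchurInterpolant_iff_pickKernel_posSemidef hlam hdist]
  simp only [pick_sum_eq_smul_kernelForm lam w _ hC.ne',
    smul_nonneg_iff_nonneg_of_pos_left (pow_pos hC 2)]
  rfl
end

section
/- Let λ_1, …, λ_n be distinct points in the open unit disk, w_1, …, w_n ∈ ℂ, and C > 0. There exists a function f in the Wiener algebra W (absolutely convergent Taylor series) with f(λ_i) = w_i for all i and ‖f‖_W ≤ C if and only if for every finite sequence of complex numbers α_1, …, α_n: sup_{j≥0} |∑_{i=1}^n α_i w_i λ_i^j| ≤ C · sup_{j≥0} |∑_{i=1}^n α_i λ_i^j|. -/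
/-!
Under the pairing `⟨a, x⟩ = ∑ₖ aₖ xₖ` the Wiener algebra, i.e. `ℓ¹(ℕ)`, acts on `ℓ^∞(ℕ)` with norm
`‖a‖₁`. Pairing a Taylor series `a` with the shifted sequence `(∑ᵢ αᵢ λᵢ^(k+j))ₖ` gives
`∑ᵢ αᵢ wᵢ λᵢ^j`, which yields the necessity of the condition. Conversely, the condition at `j = 0`
makes `∑ᵢ αᵢ (λᵢ^j)ⱼ ↦ ∑ᵢ αᵢ wᵢ` a functional of norm `≤ C` on a subspace of `ℓ^∞(ℕ)`. Extend it
by Hahn–Banach to `ψ` and set `aₖ = ψ(eₖ)`: testing `ψ` on finitely supported vectors of unimodular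
entries gives `‖a‖₁ ≤ ‖ψ‖ ≤ C`, and because `|λᵢ| < 1` the truncations of `(λᵢ^j)ⱼ` converge in
`ℓ^∞`, so `∑ₖ aₖ λᵢ^k = ψ((λᵢ^j)ⱼ) = wᵢ`.
-/

open scoped ENNReal lp

section Extension

variable {𝕜 E F : Type*} [RCLike 𝕜] [AddCommGroup E] [Module 𝕜 E]
  [NormedAddCommGroup F] [NormedSpace 𝕜 F]

theorem LinearMap.exists_strongDual_comp_eq_of_norm_le (T : E →ₗ[𝕜] F) (g : E →ₗ[𝕜] 𝕜)
    {C : ℝ} (hC : 0 ≤ C) (h : ∀ x, ‖g x‖ ≤ C * ‖T x‖) :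
    ∃ ψ : StrongDual 𝕜 F, ‖ψ‖ ≤ C ∧ ∀ x, ψ (T x) = g x := by
  have hker : LinearMap.ker T ≤ LinearMap.ker g := fun x hx => by
    simpa [LinearMap.mem_ker.mp hx] using h x
  let φ : LinearMap.range T →ₗ[𝕜] 𝕜 :=
    (LinearMap.ker T).liftQ g hker ∘ₗ T.quotKerEquivRange.symm.toLinearMap
  have hφ : ∀ x, φ ⟨T x, LinearMap.mem_range_self T x⟩ = g x := fun x => by
    simp [φ, T.quotKerEquivRange_symm_apply_image]
  have hφC : ∀ y, ‖φ y‖ ≤ C * ‖y‖ := by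
    rintro ⟨_, x, rfl⟩
    simpa [hφ] using h x
  obtain ⟨ψ, hψφ, hψ⟩ := exists_extension_norm_eq _ (φ.mkContinuous C hφC)
  refine ⟨ψ, hψ ▸ LinearMap.mkContinuous_norm_le φ hC hφC, fun x => ?_⟩
  simpa [hφ] using hψφ ⟨T x, LinearMap.mem_range_self T x⟩

theorem exists_strongDual_apply_eq_of_norm_sum_le {ι : Type*} [Fintype ι] (v : ι → F)
    (w : ι → 𝕜) {C : ℝ} (hC : 0 ≤ C)
    (h : ∀ α : ι → 𝕜, ‖∑ i, α i * w i‖ ≤ C * ‖∑ i, α i • v i‖) :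
    ∃ ψ : StrongDual 𝕜 F, ‖ψ‖ ≤ C ∧ ∀ i, ψ (v i) = w i := by
  classical
  obtain ⟨ψ, hψC, hψ⟩ := (Fintype.linearCombination 𝕜 v).exists_strongDual_comp_eq_of_norm_le
    (Fintype.linearCombination 𝕜 w) hC (by simpa [Fintype.linearCombination_apply] using h)
  refine ⟨ψ, hψC, fun i => ?_⟩
  simpa [Fintype.linearCombination_apply_single] using hψ (Pi.single i 1)

end Extension

section DualOfLInfty

variable {𝕜 ι : Type*} [RCLike 𝕜] [DecidableEq ι]

theorem RCLike.exists_norm_le_one_mul_eq_norm (z : 𝕜) : ∃ u : 𝕜, ‖u‖ ≤ 1 ∧ u * z = ‖z‖ := by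
  refine ⟨starRingEnd 𝕜 z / ‖z‖, ?_, ?_⟩
  · simpa using div_self_le_one ‖z‖
  · rw [div_mul_eq_mul_div, RCLike.conj_mul, sq, mul_self_div_self]

theorem sum_norm_apply_single_le (ψ : StrongDual 𝕜 ℓ^∞(ι, 𝕜)) (s : Finset ι) :
    ∑ k ∈ s, ‖ψ (lp.single ∞ k 1)‖ ≤ ‖ψ‖ := by
  choose u hu_le hu using fun k => RCLike.exists_norm_le_one_mul_eq_norm (ψ (lp.single ∞ k 1))
  let x : ℓ^∞(ι, 𝕜) := ∑ k ∈ s, lp.single ∞ k (u k)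
  have hx : ‖x‖ ≤ 1 := by
    refine lp.norm_le_of_forall_le zero_le_one fun j => ?_
    simp only [x, lp.coeFn_sum, Finset.sum_apply, lp.single_apply, Finset.sum_pi_single]
    split_ifs
    exacts [hu_le j, by simp]
  have hψx : ψ x = ((∑ k ∈ s, ‖ψ (lp.single ∞ k 1)‖ : ℝ) : 𝕜) := by
    push_cast
    refine (map_sum ψ _ _).trans (Finset.sum_congr rfl fun k _ => ?_)
    rw [← mul_one (u k), ← smul_eq_mul, lp.single_smul, map_smul, smul_eq_mul, hu k]
  calc ∑ k ∈ s, ‖ψ (lp.single ∞ k 1)‖ = ‖ψ x‖ := by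
        rw [hψx, RCLike.norm_ofReal, abs_of_nonneg (by positivity)]
    _ ≤ ‖ψ‖ * ‖x‖ := ψ.le_opNorm x
    _ ≤ ‖ψ‖ := mul_le_of_le_one_right (norm_nonneg ψ) hx

theorem summable_norm_apply_single (ψ : StrongDual 𝕜 ℓ^∞(ι, 𝕜)) :
    Summable fun k => ‖ψ (lp.single ∞ k 1)‖ :=
  summable_of_sum_le (fun _ => norm_nonneg _) (sum_norm_apply_single_le ψ)

theorem tsum_norm_apply_single_le (ψ : StrongDual 𝕜 ℓ^∞(ι, 𝕜)) :
    ∑' k, ‖ψ (lp.single ∞ k 1)‖ ≤ ‖ψ‖ :=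
  (summable_norm_apply_single ψ).tsum_le_of_sum_le (sum_norm_apply_single_le ψ)

end DualOfLInfty

section PowSeq

variable {𝕜 : Type*} [NormedField 𝕜]

def powSeq (z : 𝕜) (hz : ‖z‖ ≤ 1) : ℓ^∞(ℕ, 𝕜) :=
  ⟨fun j => z ^ j, memℓp_infty ⟨1, by
    rintro _ ⟨j, rfl⟩
    simpa only [norm_pow] using pow_le_one₀ (norm_nonneg z) hz⟩⟩

@[simp]
theorem powSeq_apply (z : 𝕜) (hz : ‖z‖ ≤ 1) (j : ℕ) : powSeq z hz j = z ^ j := rfl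

theorem hasSum_single_powSeq [CompleteSpace 𝕜] {z : 𝕜} (hz : ‖z‖ < 1) :
    HasSum (fun k => (lp.single ∞ k (z ^ k) : ℓ^∞(ℕ, 𝕜))) (powSeq z hz.le) := by
  have hnorm : Summable fun k => ‖(lp.single ∞ k (z ^ k) : ℓ^∞(ℕ, 𝕜))‖ := by
    simpa [lp.norm_single] using summable_geometric_of_lt_one (norm_nonneg z) hz
  rw [hasSum_iff_tendsto_nat_of_summable_norm hnorm, tendsto_iff_norm_sub_tendsto_zero]
  refine squeeze_zero (fun _ => norm_nonneg _) (fun N => ?_)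
    (tendsto_pow_atTop_nhds_zero_of_lt_one (norm_nonneg z) hz)
  refine lp.norm_le_of_forall_le (by positivity) fun j => ?_
  simp only [lp.coeFn_sub, lp.coeFn_sum, Pi.sub_apply, Finset.sum_apply, lp.single_apply,
    Finset.sum_pi_single, Finset.mem_range, powSeq_apply]
  split_ifs with hj
  · simp [pow_nonneg]
  · simpa using pow_le_pow_of_le_one (norm_nonneg z) hz.le (not_lt.mp hj)

theorem hasSum_apply_single_mul_pow [CompleteSpace 𝕜] (ψ : StrongDual 𝕜 ℓ^∞(ℕ, 𝕜)) {z : 𝕜}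
    (hz : ‖z‖ < 1) : HasSum (fun k => ψ (lp.single ∞ k 1) * z ^ k) (ψ (powSeq z hz.le)) := by
  have hψ : ∀ k, ψ (lp.single ∞ k (z ^ k)) = ψ (lp.single ∞ k 1) * z ^ k := fun k => by
    simpa [mul_comm] using congrArg ψ (lp.single_smul ∞ k (z ^ k) (1 : 𝕜))
  simpa only [Function.comp_def, hψ] using ψ.hasSum (hasSum_single_powSeq hz)

variable {ι : Type*} [Fintype ι] (z : ι → 𝕜) (hz : ∀ i, ‖z i‖ ≤ 1)

theorem sum_smul_powSeq_apply (β : ι → 𝕜) (j : ℕ) :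
    (∑ i, β i • powSeq (z i) (hz i) : ℓ^∞(ℕ, 𝕜)) j = ∑ i, β i * z i ^ j := by
  rw [lp.coeFn_sum, Finset.sum_apply]
  simp

theorem norm_sum_smul_powSeq (β : ι → 𝕜) :
    ‖∑ i, β i • powSeq (z i) (hz i)‖ = ⨆ j, ‖∑ i, β i * z i ^ j‖ := by
  simp only [lp.norm_eq_ciSup, sum_smul_powSeq_apply]

end PowSeq

section Interpolation

variable {𝕜 : Type*} {a : ℕ → 𝕜}

theorem norm_tsum_mul_le_of_norm_le [NormedField 𝕜] (ha : Summable (‖a ·‖)) {y : ℕ → 𝕜}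
    {B : ℝ} (hy : ∀ k, ‖y k‖ ≤ B) : ‖∑' k, a k * y k‖ ≤ (∑' k, ‖a k‖) * B := by
  have hle : ∀ k, ‖a k * y k‖ ≤ ‖a k‖ * B := fun k =>
    (norm_mul_le _ _).trans (mul_le_mul_of_nonneg_left (hy k) (norm_nonneg _))
  have hsum := Summable.of_nonneg_of_le (fun _ => norm_nonneg _) hle (ha.mul_right B)
  calc ‖∑' k, a k * y k‖ ≤ ∑' k, ‖a k * y k‖ := norm_tsum_le_tsum_norm hsum
    _ ≤ ∑' k, ‖a k‖ * B := hsum.tsum_le_tsum hle (ha.mul_right B)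
    _ = (∑' k, ‖a k‖) * B := tsum_mul_right

theorem summable_mul_pow_of_norm_le_one [NormedField 𝕜] [CompleteSpace 𝕜]
    (ha : Summable (‖a ·‖)) {z : 𝕜} (hz : ‖z‖ ≤ 1) : Summable fun k => a k * z ^ k :=
  .of_norm_bounded ha fun k => by
    simpa [norm_pow] using
      mul_le_of_le_one_right (norm_nonneg (a k)) (pow_le_one₀ (norm_nonneg z) hz)

variable {ι : Type*} [Fintype ι] {z : ι → 𝕜}

theorem sum_mul_tsum_mul_pow_mul_pow [NormedField 𝕜] [CompleteSpace 𝕜] (ha : Summable (‖a ·‖))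
    (hz : ∀ i, ‖z i‖ ≤ 1) (α : ι → 𝕜) (j : ℕ) :
    ∑ i, α i * (∑' k, a k * z i ^ k) * z i ^ j = ∑' k, a k * ∑ i, α i * z i ^ (k + j) := by
  have hterm : ∀ i, α i * (∑' k, a k * z i ^ k) * z i ^ j =
      ∑' k, a k * (α i * z i ^ (k + j)) := fun i => by
    rw [mul_comm (α i), mul_assoc, ← tsum_mul_right]
    exact tsum_congr fun k => by ring
  simp_rw [hterm, Finset.mul_sum]
  refine (Summable.tsum_finsetSum fun i _ => ?_).symm
  simpa [pow_add, mul_left_comm, mul_assoc] using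
    (summable_mul_pow_of_norm_le_one ha (hz i)).mul_right (α i * z i ^ j)

theorem iSup_norm_sum_mul_tsum_mul_pow_le [NormedField 𝕜] [CompleteSpace 𝕜]
    (ha : Summable (‖a ·‖)) (hz : ∀ i, ‖z i‖ ≤ 1) (α : ι → 𝕜) :
    (⨆ j, ‖∑ i, α i * (∑' k, a k * z i ^ k) * z i ^ j‖) ≤
      (∑' k, ‖a k‖) * ⨆ j, ‖∑ i, α i * z i ^ j‖ := by
  have hx : ∀ m, ‖∑ i, α i * z i ^ m‖ ≤ ‖∑ i, α i • powSeq (z i) (hz i)‖ := fun m => by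
    rw [← sum_smul_powSeq_apply z hz]
    exact lp.norm_apply_le_norm ENNReal.top_ne_zero _ m
  refine ciSup_le fun j => ?_
  rw [sum_mul_tsum_mul_pow_mul_pow ha hz, ← norm_sum_smul_powSeq z hz]
  exact norm_tsum_mul_le_of_norm_le ha fun k => hx (k + j)

theorem exists_tsum_mul_pow_eq_of_iSup_norm_le [RCLike 𝕜] (hz : ∀ i, ‖z i‖ < 1) (w : ι → 𝕜)
    {C : ℝ} (hC : 0 ≤ C)
    (h : ∀ α : ι → 𝕜, (⨆ j, ‖∑ i, α i * w i * z i ^ j‖) ≤ C * ⨆ j, ‖∑ i, α i * z i ^ j‖) :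
    ∃ a : ℕ → 𝕜, Summable (‖a ·‖) ∧ (∀ i, ∑' k, a k * z i ^ k = w i) ∧ ∑' k, ‖a k‖ ≤ C := by
  have hz₁ : ∀ i, ‖z i‖ ≤ 1 := fun i => (hz i).le
  obtain ⟨ψ, hψC, hψ⟩ := exists_strongDual_apply_eq_of_norm_sum_le
      (fun i => powSeq (z i) (hz₁ i)) w hC fun α => by
    calc ‖∑ i, α i * w i‖ = ‖(∑ i, (α i * w i) • powSeq (z i) (hz₁ i) : ℓ^∞(ℕ, 𝕜)) 0‖ := by
          simp only [sum_smul_powSeq_apply, pow_zero, mul_one]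
      _ ≤ ‖∑ i, (α i * w i) • powSeq (z i) (hz₁ i)‖ := lp.norm_apply_le_norm ENNReal.top_ne_zero _ 0
      _ = ⨆ j, ‖∑ i, α i * w i * z i ^ j‖ := norm_sum_smul_powSeq z hz₁ _
      _ ≤ C * ⨆ j, ‖∑ i, α i * z i ^ j‖ := h α
      _ = C * ‖∑ i, α i • powSeq (z i) (hz₁ i)‖ := by rw [norm_sum_smul_powSeq]
  refine ⟨fun k => ψ (lp.single ∞ k 1), summable_norm_apply_single ψ, fun i => ?_,
    (tsum_norm_apply_single_le ψ).trans hψC⟩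
  rw [(hasSum_apply_single_mul_pow ψ (hz i)).tsum_eq, hψ]

end Interpolation

theorem stmt11_general (n : ℕ) (lam : Fin n → ℂ) (hlam : ∀ i, ‖lam i‖ < 1)
    (w : Fin n → ℂ) (C : ℝ) (hC : 0 < C) :
    (∃ a : ℕ → ℂ, Summable (fun k => ‖a k‖) ∧
        (∀ i, ∑' k : ℕ, a k * (lam i) ^ k = w i) ∧
        ∑' k : ℕ, ‖a k‖ ≤ C)
      ↔ ∀ α : Fin n → ℂ,
        (⨆ j : ℕ, ‖∑ i, α i * w i * (lam i) ^ j‖) ≤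
          C * ⨆ j : ℕ, ‖∑ i, α i * (lam i) ^ j‖ := by
  constructor
  · rintro ⟨a, ha, hw, haC⟩ α
    have hsup := iSup_norm_sum_mul_tsum_mul_pow_le ha (fun i => (hlam i).le) α
    simp only [hw] at hsup
    exact hsup.trans (mul_le_mul_of_nonneg_right haC (Real.iSup_nonneg fun _ => norm_nonneg _))
  · exact exists_tsum_mul_pow_eq_of_iSup_norm_le hlam w hC.le

/-- Wiener-algebra interpolation. For distinct `λ_i` in the open unit
disk, `w_i ∈ ℂ` and `C > 0`, there exists `f ∈ W` (given by its absolutely summable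
Taylor coefficients `a`) with `f(λ_i) = w_i` and `‖f‖_W = ∑_j |a j| ≤ C` iff for
every `α : Fin n → ℂ`,
`sup_{j≥0} |∑_i α_i w_i λ_i^j| ≤ C · sup_{j≥0} |∑_i α_i λ_i^j|`. -/
theorem stmt11 (n : ℕ) (lam : Fin n → ℂ) (hlam : ∀ i, ‖lam i‖ < 1)
    (hdist : Function.Injective lam) (w : Fin n → ℂ) (C : ℝ) (hC : 0 < C) :
    (∃ a : ℕ → ℂ, Summable (fun k => ‖a k‖) ∧
        (∀ i, ∑' k : ℕ, a k * (lam i) ^ k = w i) ∧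
        ∑' k : ℕ, ‖a k‖ ≤ C)
      ↔ ∀ α : Fin n → ℂ,
        (⨆ j : ℕ, ‖∑ i, α i * w i * (lam i) ^ j‖) ≤
          C * ⨆ j : ℕ, ‖∑ i, α i * (lam i) ^ j‖ :=
  stmt11_general n lam hlam w C hC
end
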